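/- arXiv:0904.0068 — 2 statements merged into one kernel-verified Lean document; each statement's English description precedes it below -/
import Mathlib

section
/- Let A be an m×n real matrix satisfying SG_{s,β}(ξ) with ξ ∈ (0,1), β ∈ [0,∞) for a norm ‖·‖ on ℝ^m, and let α be the maximum of the ‖·‖-norms of the columns of A. Let w ∈ ℝ^n satisfy w_i ≥ 0 for all i ∈ P_+ and ‖w − w^s‖₁ ≤ μ, where w^s is obtained from w by zeroing all but the s largest-in-magnitude entries. Let y ∈ ℝ^m satisfy ‖Aw − y‖ ≤ ε. Let x ∈ ℝ^n satisfy x_i ≥ 0 for all i ∈ P_+, ‖Ax − y‖ ≤ δ, and ‖x‖₁ ≤ Opt + ν, where Opt = min{‖z‖₁ : ‖Az − y‖ ≤ ε, z_i ≥ 0 for all i ∈ P_+}. Then ‖x − w‖₁ ≤ ((1+ξ)/(1−ξ))·ν + (2(1+βα)/(1−ξ))·μ + (2β/(1−ξ))·(ε + δ). -/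
open Finset

noncomputable def normS1 {n : ℕ} (s : ℕ) (x : Fin n → ℝ) : ℝ :=
  (Finset.univ.powerset.filter (fun J : Finset (Fin n) => J.card ≤ s)).sup'
    ⟨∅, by simp⟩ (fun J => ∑ i ∈ J, |x i|)

noncomputable def dualNorm {m : ℕ} (N : (Fin m → ℝ) → ℝ) (v : Fin m → ℝ) : ℝ :=
  sSup {r : ℝ | ∃ x : Fin m → ℝ, N x ≤ 1 ∧ r = ∑ k, v k * x k}

def IsNorm {m : ℕ} (N : (Fin m → ℝ) → ℝ) : Prop :=
  (∀ x y, N (x + y) ≤ N x + N y) ∧ (∀ (c : ℝ) (x), N (c • x) = |c| * N x) ∧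
  (∀ x, N x = 0 → x = 0)

def SemiGood {m n : ℕ} (A : Matrix (Fin m) (Fin n) ℝ) (Pplus : Finset (Fin n)) (s : ℕ) : Prop :=
  ∀ w : Fin n → ℝ,
    (Finset.univ.filter (fun i => w i ≠ 0)).card ≤ s →
    (∀ i ∈ Pplus, 0 ≤ w i) →
    ∀ z : Fin n → ℝ, A.mulVec z = A.mulVec w → (∀ i ∈ Pplus, 0 ≤ z i) →
      (∑ i, |z i|) ≤ (∑ i, |w i|) → z = w

def SGCond {m n : ℕ} (A : Matrix (Fin m) (Fin n) ℝ) (Pplus : Finset (Fin n))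
    (s : ℕ) (ξ θ : ℝ) : Prop :=
  ∀ x : Fin n → ℝ, A.mulVec x = 0 → ∀ J : Finset (Fin n), J.card ≤ s →
    ∑ i ∈ J ∩ Pplus, x i + ∑ i ∈ J ∩ Pplusᶜ, |x i| ≤
      ξ * (∑ i ∈ Pplusᶜ \ J, |x i| + ∑ i ∈ Pplus \ J, max (-x i) (θ * x i))

def SGbCond {m n : ℕ} (A : Matrix (Fin m) (Fin n) ℝ) (Pplus : Finset (Fin n))
    (s : ℕ) (ξ θ β : ℝ) (N : (Fin m → ℝ) → ℝ) : Prop :=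
  ∀ x : Fin n → ℝ, ∀ J : Finset (Fin n), J.card ≤ s →
    ∑ i ∈ J ∩ Pplus, x i + ∑ i ∈ J ∩ Pplusᶜ, |x i| ≤
      β * N (A.mulVec x) +
        ξ * (∑ i ∈ Pplusᶜ \ J, |x i| + ∑ i ∈ Pplus \ J, max (-x i) (θ * x i))

def SGbCondSign {m n : ℕ} (A : Matrix (Fin m) (Fin n) ℝ) (Pplus : Finset (Fin n))
    (s : ℕ) (ξ β : ℝ) (N : (Fin m → ℝ) → ℝ) : Prop :=
  ∀ J : Finset (Fin n), J.card ≤ s →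
    ∀ x : Fin n → ℝ, (∀ i ∈ Pplus \ J, x i ≤ 0) →
      ∑ i ∈ J ∩ Pplus, x i + ∑ i ∈ J ∩ Pplusᶜ, |x i| ≤
        β * N (A.mulVec x) + ξ * ∑ i ∈ Jᶜ, |x i|

noncomputable def Phi {n : ℕ} (Pplus : Finset (Fin n)) (s : ℕ) (ξ θ : ℝ)
    (x : Fin n → ℝ) : ℝ :=
  normS1 s (fun i => if i ∈ Pplus then (1 + θ * ξ) * max (x i) 0 else (1 + ξ) * |x i|)

def VSGCert {m n : ℕ} (A : Matrix (Fin m) (Fin n) ℝ) (Pplus : Finset (Fin n))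
    (s : ℕ) (ξ θ ρ σ : ℝ) (N : (Fin m → ℝ) → ℝ)
    (Y : Matrix (Fin m) (Fin n) ℝ) (v : Fin m → ℝ) : Prop :=
  (∀ i, Phi Pplus s ξ θ (fun j => -((1 - Y.transpose * A : Matrix (Fin n) (Fin n) ℝ) j i)) + (A.transpose.mulVec v) i ≤ ξ) ∧
  (∀ i ∉ Pplus, Phi Pplus s ξ θ (fun j => (1 - Y.transpose * A : Matrix (Fin n) (Fin n) ℝ) j i) - (A.transpose.mulVec v) i ≤ ξ) ∧
  (∀ i ∈ Pplus, Phi Pplus s ξ θ (fun j => (1 - Y.transpose * A : Matrix (Fin n) (Fin n) ℝ) j i) - (A.transpose.mulVec v) i ≤ θ * ξ) ∧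
  (∀ i, dualNorm N (fun k => Y k i) ≤ σ) ∧
  dualNorm N v ≤ ρ

def VSG {m n : ℕ} (A : Matrix (Fin m) (Fin n) ℝ) (Pplus : Finset (Fin n))
    (s : ℕ) (ξ θ ρ σ : ℝ) (N : (Fin m → ℝ) → ℝ) : Prop :=
  ∃ (Y : Matrix (Fin m) (Fin n) ℝ) (v : Fin m → ℝ), VSGCert A Pplus s ξ θ ρ σ N Y v

def VSGbarCert {m n : ℕ} (A : Matrix (Fin m) (Fin n) ℝ) (Pplus : Finset (Fin n))
    (s : ℕ) (ξ σ θ : ℝ) (N : (Fin m → ℝ) → ℝ) (Y : Matrix (Fin m) (Fin n) ℝ) : Prop :=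
  (∀ i, dualNorm N (fun k => Y k i) ≤ σ) ∧
  (∀ i ∉ Pplus, ∀ j, |(1 - Y.transpose * A : Matrix (Fin n) (Fin n) ℝ) i j| ≤ ξ / ((1 + ξ) * s)) ∧
  (∀ i ∈ Pplus, ∀ j ∉ Pplus,
    -(ξ / ((1 + ξ * θ) * s)) ≤ (1 - Y.transpose * A : Matrix (Fin n) (Fin n) ℝ) i j ∧
      (1 - Y.transpose * A : Matrix (Fin n) (Fin n) ℝ) i j ≤ ξ / ((1 + ξ * θ) * s)) ∧
  (∀ i ∈ Pplus, ∀ j ∈ Pplus,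
    -(ξ / ((1 + ξ * θ) * s)) ≤ (1 - Y.transpose * A : Matrix (Fin n) (Fin n) ℝ) i j ∧
      (1 - Y.transpose * A : Matrix (Fin n) (Fin n) ℝ) i j ≤ ξ * θ / ((1 + ξ * θ) * s))

/-!
Let `u` be the truncation of `w` to a set `J` of at most `s` indices carrying its `normS1` mass,
and apply `SGbCondSign` to `v = u - x` on the subset `K ⊆ J` where `v` has the admissible sign
(drop the indices of `P₊` with `x i > u i`). Off `K` one has `|x i| = |u i| + |v i|`, so
near-optimality of `x` bounds the mass of `v` off `K` by its mass on `K` plus `ν + ‖w - u‖₁`,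
while `‖A v‖ ≤ ε + δ + α ‖w - u‖₁`. The `SG` inequality then closes up, at the price of the
factor `1 / (1 - ξ)`.
-/

namespace IsNorm

variable {m : ℕ} {N : (Fin m → ℝ) → ℝ}

theorem map_zero (hN : IsNorm N) : N 0 = 0 := by
  simpa using hN.2.1 0 0

theorem map_neg (hN : IsNorm N) (p : Fin m → ℝ) : N (-p) = N p := by
  simpa using hN.2.1 (-1) p

theorem map_sub_le (hN : IsNorm N) (p q : Fin m → ℝ) : N (p - q) ≤ N p + N q := by
  simpa only [sub_eq_add_neg, hN.map_neg] using hN.1 p (-q)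

theorem nonneg (hN : IsNorm N) (p : Fin m → ℝ) : 0 ≤ N p := by
  have h := hN.map_sub_le p p
  rw [sub_self, hN.map_zero] at h
  linarith

theorem mulVec_le {n : ℕ} (hN : IsNorm N) {A : Matrix (Fin m) (Fin n) ℝ} {α : ℝ}
    (hcol : ∀ j, N (fun k => A k j) ≤ α) (h : Fin n → ℝ) :
    N (A.mulVec h) ≤ α * ∑ j, |h j| := by
  have hA : A.mulVec h = ∑ j, h j • fun k => A k j := by
    ext k
    simp [Matrix.mulVec, dotProduct, Finset.sum_apply, mul_comm]
  calc N (A.mulVec h) ≤ ∑ j, N (h j • fun k => A k j) :=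
        hA ▸ le_sum_of_subadditive N hN.map_zero.le hN.1 _ _
    _ = ∑ j, |h j| * N (fun k => A k j) := by simp only [hN.2.1]
    _ ≤ ∑ j, |h j| * α := by gcongr with j; exact hcol j
    _ = α * ∑ j, |h j| := by rw [mul_sum]; simp only [mul_comm]

theorem mulVec_sub_le {n : ℕ} (hN : IsNorm N) {A : Matrix (Fin m) (Fin n) ℝ} {α : ℝ}
    (hcol : ∀ j, N (fun k => A k j) ≤ α) (u w x : Fin n → ℝ) (y : Fin m → ℝ) :
    N (A.mulVec (u - x)) ≤ N (A.mulVec w - y) + N (A.mulVec x - y) + α * ∑ i, |w i - u i| := by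
  have hsplit : A.mulVec (u - x) = A.mulVec w - y - (A.mulVec x - y) - A.mulVec (w - u) := by
    simp only [Matrix.mulVec_sub]
    abel
  have hwu := hN.mulVec_le hcol (w - u)
  simp only [Pi.sub_apply] at hwu
  rw [hsplit]
  linarith [hN.map_sub_le (A.mulVec w - y - (A.mulVec x - y)) (A.mulVec (w - u)),
    hN.map_sub_le (A.mulVec w - y) (A.mulVec x - y)]

end IsNorm

theorem exists_card_le_normS1_eq {n : ℕ} (s : ℕ) (w : Fin n → ℝ) :
    ∃ J : Finset (Fin n), J.card ≤ s ∧ normS1 s w = ∑ i ∈ J, |w i| := by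
  unfold normS1
  obtain ⟨J, hJ, hsup⟩ := exists_mem_eq_sup' _ fun J : Finset (Fin n) => ∑ i ∈ J, |w i|
  exact ⟨J, (mem_filter.1 hJ).2, hsup⟩

theorem exists_sparse_truncation {n : ℕ} (s : ℕ) (w : Fin n → ℝ) :
    ∃ (u : Fin n → ℝ) (J : Finset (Fin n)), J.card ≤ s ∧ (∀ i ∉ J, u i = 0) ∧
      (∀ i, 0 ≤ w i → 0 ≤ u i) ∧ ∑ i, |u i| = normS1 s w ∧
      ∑ i, |w i - u i| = ∑ i, |w i| - normS1 s w := by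
  classical
  obtain ⟨J, hJs, hJ⟩ := exists_card_le_normS1_eq s w
  have hu : ∑ i, |J.piecewise w 0 i| = normS1 s w := by
    rw [hJ, ← sum_subset J.subset_univ fun i _ hi => by simp [hi]]
    exact sum_congr rfl fun i hi => by simp [hi]
  refine ⟨J.piecewise w 0, J, hJs, fun i hi => piecewise_eq_of_notMem _ _ _ hi,
    fun i hi => by by_cases hiJ : i ∈ J <;> simp [hiJ, hi], hu, ?_⟩
  rw [← hu, eq_sub_iff_add_eq, ← sum_add_distrib]
  refine sum_congr rfl fun i _ => ?_
  by_cases hiJ : i ∈ J <;> simp [hiJ]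

theorem SGbCondSign.sum_abs_le {m n : ℕ} {A : Matrix (Fin m) (Fin n) ℝ}
    {Pplus : Finset (Fin n)} {s : ℕ} {ξ β : ℝ} {N : (Fin m → ℝ) → ℝ}
    (hSG : SGbCondSign A Pplus s ξ β N) {K : Finset (Fin n)} (hK : K.card ≤ s)
    {v : Fin n → ℝ} (hneg : ∀ i ∈ Pplus \ K, v i ≤ 0) (hpos : ∀ i ∈ K ∩ Pplus, 0 ≤ v i) :
    ∑ i ∈ K, |v i| ≤ β * N (A.mulVec v) + ξ * ∑ i ∈ Kᶜ, |v i| := by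
  have hL : ∑ i ∈ K ∩ Pplus, v i + ∑ i ∈ K ∩ Pplusᶜ, |v i| = ∑ i ∈ K, |v i| := by
    rw [← sum_inter_add_sum_sdiff K Pplus, ← sdiff_eq_inter_compl]
    congr 1
    exact sum_congr rfl fun i hi => (abs_of_nonneg (hpos i hi)).symm
  exact hL ▸ hSG K hK v hneg

theorem SGbCondSign.one_sub_mul_sum_abs_sub_le {m n : ℕ} {A : Matrix (Fin m) (Fin n) ℝ}
    {Pplus : Finset (Fin n)} {s : ℕ} {ξ β : ℝ} {N : (Fin m → ℝ) → ℝ}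
    (hSG : SGbCondSign A Pplus s ξ β N) (hξ0 : 0 ≤ ξ)
    {J : Finset (Fin n)} (hJ : J.card ≤ s) {u x : Fin n → ℝ}
    (hu : ∀ i ∈ Pplus, 0 ≤ u i) (huJ : ∀ i ∉ J, u i = 0) (hx : ∀ i ∈ Pplus, 0 ≤ x i)
    {c : ℝ} (hc : ∑ i, |x i| ≤ ∑ i, |u i| + c) :
    (1 - ξ) * ∑ i, |u i - x i| ≤ 2 * β * N (A.mulVec (u - x)) + (1 + ξ) * c := by
  classical
  set K := J.filter fun i => i ∈ Pplus → x i ≤ u i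
  have hSK : ∑ i ∈ K, |u i - x i| ≤ β * N (A.mulVec (u - x)) + ξ * ∑ i ∈ Kᶜ, |u i - x i| := by
    refine hSG.sum_abs_le ((card_filter_le _ _).trans hJ) (fun i hi => ?_) fun i hi => ?_
    · obtain ⟨hiP, hiK⟩ := mem_sdiff.1 hi
      by_cases hiJ : i ∈ J
      · have : ¬ x i ≤ u i := fun h => hiK (mem_filter.2 ⟨hiJ, fun _ => h⟩)
        linarith
      · simp [huJ i hiJ, hx i hiP]
    · obtain ⟨hiK, hiP⟩ := mem_inter.1 hi
      exact sub_nonneg.2 ((mem_filter.1 hiK).2 hiP)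
  have hK : ∑ i ∈ K, |u i| ≤ ∑ i ∈ K, |x i| + ∑ i ∈ K, |u i - x i| := by
    rw [← sum_add_distrib]
    exact sum_le_sum fun i _ => by linarith [abs_sub_abs_le_abs_sub (u i) (x i)]
  -- Off `K`, either `u i = 0` or `0 ≤ u i < x i`: the triangle inequality is an equality there.
  have hKc : ∑ i ∈ Kᶜ, |x i| = ∑ i ∈ Kᶜ, |u i| + ∑ i ∈ Kᶜ, |u i - x i| := by
    rw [← sum_add_distrib]
    refine sum_congr rfl fun i hi => ?_
    by_cases hiJ : i ∈ J
    · obtain ⟨hiP, hxu⟩ : i ∈ Pplus ∧ ¬ x i ≤ u i := by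
        simpa [K, hiJ] using mem_compl.1 hi
      rw [abs_of_nonneg (hx i hiP), abs_of_nonneg (hu i hiP), abs_of_neg (by linarith)]
      ring
    · simp [huJ i hiJ]
  have hT : ∑ i ∈ Kᶜ, |u i - x i| ≤ ∑ i ∈ K, |u i - x i| + c := by
    linarith [sum_add_sum_compl K fun i => |u i|, sum_add_sum_compl K fun i => |x i|]
  rw [← sum_add_sum_compl K]
  linarith [mul_nonneg hξ0 (sub_nonneg.2 hT)]

theorem stmt6 {m n : ℕ} (A : Matrix (Fin m) (Fin n) ℝ) (Pplus : Finset (Fin n))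
    (s : ℕ) (ξ β : ℝ) (hξ0 : 0 < ξ) (hξ1 : ξ < 1) (hβ : 0 ≤ β)
    (N : (Fin m → ℝ) → ℝ) (hN : IsNorm N)
    (hSG : SGbCondSign A Pplus s ξ β N)
    (α : ℝ) (hα : IsGreatest {r : ℝ | ∃ j : Fin n, r = N (fun k => A k j)} α)
    (w : Fin n → ℝ) (μ : ℝ) (hw : ∀ i ∈ Pplus, 0 ≤ w i)
    (hμ : (∑ i, |w i|) - normS1 s w ≤ μ)
    (y : Fin m → ℝ) (ε : ℝ) (hε : N (A.mulVec w - y) ≤ ε)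
    (x : Fin n → ℝ) (ν δ : ℝ) (hx : ∀ i ∈ Pplus, 0 ≤ x i)
    (hδ : N (A.mulVec x - y) ≤ δ)
    (hopt : (∑ i, |x i|) ≤
      sInf {r : ℝ | ∃ z : Fin n → ℝ,
        N (A.mulVec z - y) ≤ ε ∧ (∀ i ∈ Pplus, 0 ≤ z i) ∧ r = ∑ i, |z i|} + ν) :
    (∑ i, |x i - w i|) ≤
      (1 + ξ) / (1 - ξ) * ν + 2 * (1 + β * α) / (1 - ξ) * μ + 2 * β / (1 - ξ) * (ε + δ) := by
  obtain ⟨u, J, hJs, huJ, hu, hu_sum, hwu_sum⟩ := exists_sparse_truncation s w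
  have hxw : ∑ i, |x i| ≤ ∑ i, |w i| + ν := by
    refine hopt.trans (add_le_add_left ?_ ν)
    exact csInf_le ⟨0, by rintro r ⟨z, -, -, rfl⟩; positivity⟩ ⟨w, hε, hw, rfl⟩
  have hα0 : 0 ≤ α := by
    obtain ⟨j, rfl⟩ := hα.1
    exact hN.nonneg _
  have hMμ : ∑ i, |w i - u i| ≤ μ := hwu_sum ▸ hμ
  have hcore := hSG.one_sub_mul_sum_abs_sub_le hξ0.le hJs (fun i hi => hu i (hw i hi)) huJ hx
    (c := ∑ i, |w i - u i| + ν) (by linarith)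
  have hAu := hN.mulVec_sub_le (fun j => hα.2 ⟨j, rfl⟩) u w x y
  have hdist : ∑ i, |x i - w i| ≤ ∑ i, |u i - x i| + ∑ i, |w i - u i| := by
    rw [← sum_add_distrib]
    exact sum_le_sum fun i _ => by
      linarith [abs_sub_le (x i) (u i) (w i), abs_sub_comm (x i) (u i), abs_sub_comm (u i) (w i)]
  have h1ξ : 0 < 1 - ξ := sub_pos.2 hξ1
  rw [div_mul_eq_mul_div, div_mul_eq_mul_div, div_mul_eq_mul_div, ← add_div, ← add_div,
    le_div_iff₀ h1ξ]
  linarith [mul_le_mul_of_nonneg_left hAu hβ, mul_le_mul_of_nonneg_left hε hβ,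
    mul_le_mul_of_nonneg_left hδ hβ, mul_le_mul_of_nonneg_left hdist h1ξ.le,
    mul_le_mul_of_nonneg_left hMμ (by positivity : (0 : ℝ) ≤ 1 + β * α)]
end

section
/- Let Z be a ν×ν real matrix of rank m, let s > 1 be a positive integer, and let δ_i ∈ (0,1], 1 ≤ i ≤ ν, be such that the columns C_i of the matrix I_ν − Z satisfy ‖C_i‖_{s,1} ≤ 1 − δ_i for every i. If ν > (2√(2m) + 1)², then s ≤ 2√(2m) + 1. -/
open Finset

/-!
The bound on the columns of `1 - Z` forces `Z i i > 0`, and after rescaling the columns of `Z` to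
unit diagonal, `W = Z * diagonal (fun i => (Z i i)⁻¹)`, any `s - 1` off-diagonal entries of a column
of `W` have absolute sum at most `1`. So fewer than `s - 1` of them exceed `1 / (s - 1)`, and
`∑ i j, W i j ^ 2 ≤ ν (2 + ν / (s - 1) ^ 2)`. On the other hand `tr W = ν` and `rank W = m`, and
`(tr A)² ≤ 2 rank A ∑ i j, A i j ^ 2` for every real square matrix `A` (apply
`(tr M)² ≤ rank M · tr (M * M)`, read off the eigenvalues, to the symmetric `M = A + Aᵀ`).
Together: `ν ≤ 4m + 2mν / (s - 1) ^ 2`, impossible once `(s - 1) ^ 2 > 8m` and `ν > 8m + 1`.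
-/

open Matrix

theorem sum_abs_le_normS1 {n s : ℕ} (x : Fin n → ℝ) {J : Finset (Fin n)} (hJ : #J ≤ s) :
    ∑ i ∈ J, |x i| ≤ normS1 s x :=
  le_sup' (fun J => ∑ i ∈ J, |x i|) (mem_filter.2 ⟨mem_powerset.2 (subset_univ J), hJ⟩)

theorem sum_abs_le_diag_sub_of_normS1_le {n s : ℕ} (Z : Matrix (Fin n) (Fin n) ℝ) (i : Fin n)
    {d : ℝ} (hZ : normS1 s (fun j => (1 - Z) j i) ≤ 1 - d) {J : Finset (Fin n)} (hiJ : i ∉ J)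
    (hJ : #J + 1 ≤ s) : ∑ j ∈ J, |Z j i| ≤ Z i i - d := by
  have h := (sum_abs_le_normS1 _ (by rwa [card_insert_of_notMem hiJ])).trans hZ
  rw [sum_insert hiJ, Matrix.sub_apply, one_apply_eq] at h
  have hoff : ∀ j ∈ J, |(1 - Z) j i| = |Z j i| := fun j hj => by
    rw [Matrix.sub_apply, one_apply_ne (ne_of_mem_of_not_mem hj hiJ), zero_sub, abs_neg]
  rw [sum_congr rfl hoff] at h
  linarith [le_abs_self (1 - Z i i)]

theorem sum_sq_le_of_sum_abs_le {ι : Type*} (y : ι → ℝ) (T : Finset ι) {k : ℕ} (hk : 0 < k)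
    (hy : ∀ J ⊆ T, #J ≤ k → ∑ j ∈ J, |y j| ≤ 1) :
    ∑ j ∈ T, y j ^ 2 ≤ 1 + #T / k ^ 2 := by
  have hk' : (0 : ℝ) < k := by exact_mod_cast hk
  set B := T.filter (fun j => 1 / (k : ℝ) < |y j|)
  have hB : #B ≤ k := by
    by_contra! hBk
    obtain ⟨J, hJB, hJ⟩ := exists_subset_card_eq hBk.le
    have hlt : ∑ _j ∈ J, 1 / (k : ℝ) < ∑ j ∈ J, |y j| :=
      sum_lt_sum_of_nonempty (card_pos.1 (hJ ▸ hk)) fun j hj => (mem_filter.1 (hJB hj)).2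
    rw [sum_const, hJ, nsmul_eq_mul, mul_one_div_cancel hk'.ne'] at hlt
    exact hlt.not_ge (hy J (hJB.trans (filter_subset _ _)) hJ.le)
  have hbig : ∑ j ∈ B, y j ^ 2 ≤ 1 := by
    have h1 := hy B (filter_subset _ _) hB
    calc ∑ j ∈ B, y j ^ 2 = ∑ j ∈ B, |y j| ^ 2 := by simp only [sq_abs]
      _ ≤ (∑ j ∈ B, |y j|) ^ 2 := sum_sq_le_sq_sum_of_nonneg fun j _ => abs_nonneg _
      _ ≤ 1 := pow_le_one₀ (sum_nonneg fun j _ => abs_nonneg _) h1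
  have hsmall : ∑ j ∈ T.filter (fun j => ¬ 1 / (k : ℝ) < |y j|), y j ^ 2 ≤ #T / k ^ 2 := by
    calc ∑ j ∈ T.filter (fun j => ¬ 1 / (k : ℝ) < |y j|), y j ^ 2
        ≤ ∑ _j ∈ T.filter (fun j => ¬ 1 / (k : ℝ) < |y j|), (1 / (k : ℝ)) ^ 2 := by
          refine sum_le_sum fun j hj => ?_
          rw [← sq_abs]
          exact pow_le_pow_left₀ (abs_nonneg _) (not_lt.1 (mem_filter.1 hj).2) 2
      _ ≤ ∑ _j ∈ T, (1 / (k : ℝ)) ^ 2 :=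
          sum_le_sum_of_subset_of_nonneg (filter_subset _ _) fun _ _ _ => sq_nonneg _
      _ = #T / k ^ 2 := by rw [sum_const, nsmul_eq_mul]; ring
  rw [← sum_filter_add_sum_filter_not T (fun j => 1 / (k : ℝ) < |y j|)]
  linarith

theorem Matrix.rank_add_le {m n K : Type*} [Fintype n] [Fintype m] [Field K]
    (A B : Matrix m n K) : (A + B).rank ≤ A.rank + B.rank := by
  have hrange : LinearMap.range (A + B).mulVecLin ≤
      LinearMap.range A.mulVecLin ⊔ LinearMap.range B.mulVecLin := by
    rintro y ⟨x, rfl⟩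
    rw [mulVecLin_add]
    exact Submodule.add_mem_sup ⟨x, rfl⟩ ⟨x, rfl⟩
  exact (Submodule.finrank_mono hrange).trans (Submodule.finrank_add_le_finrank_add_finrank _ _)

theorem Matrix.IsHermitian.trace_sq_le_rank_mul_trace_mul_self {n : Type*} [Fintype n]
    [DecidableEq n] {M : Matrix n n ℝ} (hM : M.IsHermitian) :
    M.trace ^ 2 ≤ M.rank * (M * M).trace := by
  set ev := hM.eigenvalues
  have htrace_conj : ∀ X, (Unitary.conjStarAlgAut ℝ _ hM.eigenvectorUnitary X).trace = X.trace :=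
    fun X => by
      rw [Unitary.conjStarAlgAut_apply, trace_mul_cycle, Unitary.coe_star_mul_self, one_mul]
  have hspec : M = Unitary.conjStarAlgAut ℝ _ hM.eigenvectorUnitary (diagonal ev) :=
    hM.spectral_theorem
  have htrace : M.trace = ∑ i, ev i := by
    conv_lhs => rw [hspec]
    rw [htrace_conj, trace_diagonal]
  have htrace_sq : (M * M).trace = ∑ i, ev i ^ 2 := by
    conv_lhs => rw [hspec, ← map_mul, htrace_conj, diagonal_mul_diagonal, trace_diagonal]
    simp only [sq]
  have hrank : M.rank = #{i | ev i ≠ 0} := by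
    rw [hM.rank_eq_card_non_zero_eigs, Fintype.card_subtype]
  rw [htrace, htrace_sq, hrank, ← sum_filter_ne_zero]
  calc (∑ i with ev i ≠ 0, ev i) ^ 2 ≤ #{i | ev i ≠ 0} * ∑ i with ev i ≠ 0, ev i ^ 2 :=
        sq_sum_le_card_mul_sum_sq
    _ ≤ #{i | ev i ≠ 0} * ∑ i, ev i ^ 2 := by
        refine mul_le_mul_of_nonneg_left ?_ (Nat.cast_nonneg _)
        exact sum_le_sum_of_subset_of_nonneg (subset_univ _) fun i _ _ => sq_nonneg _

theorem Matrix.trace_sq_le_two_mul_rank_mul_sum_sq {n : Type*} [Fintype n] [DecidableEq n]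
    (A : Matrix n n ℝ) : A.trace ^ 2 ≤ 2 * A.rank * ∑ i, ∑ j, A i j ^ 2 := by
  set M := A + Aᴴ
  have hM_apply : ∀ i j, M i j = A i j + A j i := fun i j => by simp [M]
  have htrace : M.trace = 2 * A.trace := by
    rw [trace_add, trace_conjTranspose, star_trivial]; ring
  have hrank : (M.rank : ℝ) ≤ 2 * A.rank := by
    have := (rank_add_le A Aᴴ).trans_eq (by rw [rank_conjTranspose])
    exact_mod_cast this.trans_eq (two_mul _).symm
  have htrace_sq : (M * M).trace = ∑ i, ∑ j, (A i j + A j i) ^ 2 := by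
    simp only [trace, diag, mul_apply, hM_apply]
    exact sum_congr rfl fun i _ => sum_congr rfl fun j _ => by ring
  have hsum_sq : (M * M).trace ≤ 4 * ∑ i, ∑ j, A i j ^ 2 := by
    calc (M * M).trace ≤ ∑ i, ∑ j, (2 * A i j ^ 2 + 2 * A j i ^ 2) := by
          rw [htrace_sq]
          gcongr with i _ j _
          nlinarith [sq_nonneg (A i j - A j i)]
      _ = 4 * ∑ i, ∑ j, A i j ^ 2 := by
          simp only [sum_add_distrib, ← mul_sum]
          rw [sum_comm (f := fun i j => A j i ^ 2)]
          ring
  have hM_sq_nonneg : 0 ≤ (M * M).trace := by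
    rw [htrace_sq]; positivity
  have key := (isHermitian_add_transpose_self A).trace_sq_le_rank_mul_trace_mul_self
  rw [htrace] at key
  nlinarith [mul_le_mul hrank hsum_sq hM_sq_nonneg (by positivity)]

section ColumnBounds

variable {n : ℕ} (Z : Matrix (Fin n) (Fin n) ℝ) (i : Fin n) {d : ℝ}

theorem diag_pos_of_normS1_le {s : ℕ} (hs : 0 < s) (hd : 0 < d)
    (hZ : normS1 s (fun j => (1 - Z) j i) ≤ 1 - d) : 0 < Z i i := by
  have := sum_abs_le_diag_sub_of_normS1_le Z i hZ (notMem_empty i) (by simp; omega)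
  linarith [sum_empty (f := fun j => |Z j i|)]

theorem sum_sq_div_diag_le_of_normS1_le {k : ℕ} (hk : 0 < k) (hd : 0 < d)
    (hZ : normS1 (k + 1) (fun j => (1 - Z) j i) ≤ 1 - d) :
    ∑ j, (Z j i / Z i i) ^ 2 ≤ 2 + n / k ^ 2 := by
  have hdiag := diag_pos_of_normS1_le Z i k.succ_pos hd hZ
  have hoff : ∀ J ⊆ univ.erase i, #J ≤ k → ∑ j ∈ J, |Z j i / Z i i| ≤ 1 := fun J hJ hJk => by
    have hiJ : i ∉ J := fun hi => notMem_erase i univ (hJ hi)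
    have h := sum_abs_le_diag_sub_of_normS1_le Z i hZ hiJ (by omega)
    simp only [abs_div, abs_of_pos hdiag, ← sum_div]
    rw [div_le_one hdiag]
    linarith
  have hcard : (#(univ.erase i) : ℝ) / k ^ 2 ≤ n / k ^ 2 := by
    gcongr
    exact_mod_cast card_erase_le.trans_eq (card_fin n)
  have := sum_sq_le_of_sum_abs_le (fun j => Z j i / Z i i) _ hk hoff
  rw [← add_sum_erase _ _ (mem_univ i), div_self hdiag.ne']
  linarith

end ColumnBounds

theorem stmt10_general {ν : ℕ} (Z : Matrix (Fin ν) (Fin ν) ℝ) (m : ℕ) (hrank : Z.rank = m)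
    (s : ℕ) (δ : Fin ν → ℝ)
    (hδ : ∀ i, 0 < δ i ∧ δ i ≤ 1)
    (hcol : ∀ i, normS1 s (fun j => (1 - Z : Matrix (Fin ν) (Fin ν) ℝ) j i) ≤ 1 - δ i)
    (hν : (ν : ℝ) > (2 * Real.sqrt (2 * m) + 1) ^ 2) :
    (s : ℝ) ≤ 2 * Real.sqrt (2 * m) + 1 := by
  by_contra! hs
  have hsqrt := Real.sqrt_nonneg (2 * m)
  obtain ⟨k, rfl⟩ : ∃ k, s = k + 1 :=
    Nat.exists_eq_add_one_of_ne_zero (by rintro rfl; push_cast at hs; linarith)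
  push_cast at hs
  have hk : 0 < k := by exact_mod_cast (by linarith : (0 : ℝ) < k)
  have hdiag i := diag_pos_of_normS1_le Z i k.succ_pos (hδ i).1 (hcol i)
  set W := Z * diagonal fun i => (Z i i)⁻¹
  have hW_apply j i : W j i = Z j i / Z i i := by simp [W, div_eq_mul_inv]
  have hWrank : W.rank = m := by
    rw [rank_mul_eq_left_of_isUnit_det _ _ ?_, hrank]
    rw [det_diagonal, isUnit_iff_ne_zero, prod_ne_zero_iff]
    exact fun i _ => inv_ne_zero (hdiag i).ne'
  have hWtrace : W.trace = ν := by simp [trace, hW_apply, div_self (hdiag _).ne']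
  have hWsq : ∑ i, ∑ j, W i j ^ 2 ≤ ν * (2 + ν / k ^ 2) := by
    rw [sum_comm]
    refine (sum_le_sum fun i _ => ?_).trans_eq (by rw [sum_const, card_fin, nsmul_eq_mul])
    simpa only [hW_apply] using sum_sq_div_diag_le_of_normS1_le Z i hk (hδ i).1 (hcol i)
  have key := W.trace_sq_le_two_mul_rank_mul_sum_sq
  rw [hWtrace, hWrank] at key
  have hsq := Real.sq_sqrt (by positivity : (0 : ℝ) ≤ 2 * m)
  have hk_sq : 8 * m < (k : ℝ) ^ 2 := by nlinarith
  have hν_lb : 8 * m + 1 < (ν : ℝ) := by nlinarith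
  have hq : ν / k ^ 2 * k ^ 2 = (ν : ℝ) := div_mul_cancel₀ _ (by positivity)
  -- `ν ≤ 4m + 2mν/k²` and `8m < k²` give `ν < 16m/3`.
  nlinarith [mul_le_mul_of_nonneg_left hWsq (by positivity : (0 : ℝ) ≤ 2 * m),
    mul_le_mul_of_nonneg_left hk_sq.le (by positivity : (0 : ℝ) ≤ ν / k ^ 2)]

theorem stmt10 {ν : ℕ} (Z : Matrix (Fin ν) (Fin ν) ℝ) (m : ℕ) (hrank : Z.rank = m)
    (s : ℕ) (hs : 1 < s) (δ : Fin ν → ℝ)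
    (hδ : ∀ i, 0 < δ i ∧ δ i ≤ 1)
    (hcol : ∀ i, normS1 s (fun j => (1 - Z : Matrix (Fin ν) (Fin ν) ℝ) j i) ≤ 1 - δ i)
    (hν : (ν : ℝ) > (2 * Real.sqrt (2 * m) + 1) ^ 2) :
    (s : ℝ) ≤ 2 * Real.sqrt (2 * m) + 1 :=
  stmt10_general Z m hrank s δ hδ hcol hν
end
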